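/- arXiv:1507.04263 — 5 statements merged into one kernel-verified Lean document; each statement's English description precedes it below -/
import Mathlib

section
/- (Row-permutation step via Hall's matching theorem.) Let m, r ≥ 1 and let M : Fin m × Fin r → Fin m be a 'destination row' assignment such that every value in Fin m is attained by M exactly r times (counting over all m·r positions). Then there exist permutations ρ_w of Fin r, one for each row w ∈ Fin m, such that for every column index i ∈ Fin r the map w ↦ M(w, ρ_w(i)) is a bijection of Fin m; i.e., after permuting the entries within each row, every column contains each destination row label exactly once. -/
/-!
Each row has `r` entries and each label occurs `r` times, so any `k` rows carry `k * r` entries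
whose labels, each occurring at most `r` times, must comprise at least `k` distinct values. By
Hall's theorem some choice of one entry per row hits every label exactly once. Moving these
entries to the first column and deleting it leaves an assignment with `r - 1` columns in which
every label occurs `r - 1` times; induct on `r`.
-/

open Finset

namespace RowPermutation

variable {α β : Type*} [Fintype α] [DecidableEq β] {r : ℕ}

lemma card_filter_prod_eq_sum (M : α × Fin r → β) (y : β) :
    #{p | M p = y} = ∑ w, #{i | M (w, i) = y} := by
  simp only [card_filter, Fintype.sum_prod_type]

lemma card_filter_comp_perm (M : α × Fin r → β) (τ : α → Equiv.Perm (Fin r)) (y : β) :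
    #{p : α × Fin r | M (p.1, τ p.1 p.2) = y} = #{p | M p = y} := by
  simp only [card_filter_prod_eq_sum]
  exact sum_congr rfl fun w _ => card_equiv (τ w) (by simp)

lemma card_mul_eq_card_mul [Fintype β] (M : α × Fin r → β) (hM : ∀ y, #{p | M p = y} = r) :
    Fintype.card α * r = Fintype.card β * r := by
  calc Fintype.card α * r = #(univ : Finset (α × Fin r)) := by simp
    _ = ∑ y, #{p | M p = y} := card_eq_sum_card_fiberwise (by simp)
    _ = Fintype.card β * r := by simp [hM]

lemma exists_bijective_transversal [Fintype β] (hr : 0 < r) (M : α × Fin r → β)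
    (hM : ∀ y, #{p | M p = y} = r) : ∃ c : α → Fin r, Function.Bijective fun w => M (w, c w) := by
  let t : α → Finset β := fun w => univ.image fun i => M (w, i)
  have hall (A : Finset α) : #A ≤ #(A.biUnion t) := by
    have himage : (A ×ˢ univ).image M = A.biUnion t := by
      ext y; simp [t]
    have hfiber (y) (_ : y ∈ (A ×ˢ univ).image M) :
        #{p ∈ A ×ˢ (univ : Finset (Fin r)) | M p = y} ≤ r :=
      (card_le_card (filter_subset_filter _ (subset_univ _))).trans_eq (hM y)
    have := card_le_mul_card_image (A ×ˢ univ) r hfiber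
    rw [himage, card_product, card_univ, Fintype.card_fin, mul_comm r] at this
    exact Nat.le_of_mul_le_mul_right this hr
  obtain ⟨f, hf_inj, hf_mem⟩ := (all_card_le_biUnion_card_iff_exists_injective t).mp hall
  have hcard : Fintype.card α = Fintype.card β :=
    Nat.eq_of_mul_eq_mul_right hr (card_mul_eq_card_mul M hM)
  choose c hc using fun w => mem_image.mp (hf_mem w)
  refine ⟨c, ?_⟩
  rw [show (fun w => M (w, c w)) = f from funext fun w => (hc w).2]
  exact (Fintype.bijective_iff_injective_and_card f).mpr ⟨hf_inj, hcard⟩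

def dropTransversal (M : α × Fin (r + 1) → β) (c : α → Fin (r + 1)) : α × Fin r → β :=
  fun p => M (p.1, Equiv.swap 0 (c p.1) p.2.succ)

lemma card_filter_eq_one_of_bijective [Fintype β] {f : α → β} (hf : Function.Bijective f)
    (y : β) : #{w | f w = y} = 1 := by
  obtain ⟨x, hx, hx_unique⟩ := hf.existsUnique y
  exact card_eq_one.mpr ⟨x, by ext w; simpa using ⟨fun hw => hx_unique w hw, fun hw => hw ▸ hx⟩⟩

lemma card_filter_dropTransversal_add_one [Fintype β] (M : α × Fin (r + 1) → β)
    {c : α → Fin (r + 1)} (hc : Function.Bijective fun w => M (w, c w)) (y : β) :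
    #{p | dropTransversal M c p = y} + 1 = #{p | M p = y} := by
  rw [← card_filter_comp_perm M (fun w => Equiv.swap 0 (c w)), card_filter_prod_eq_sum,
    card_filter_prod_eq_sum]
  simp only [Fin.card_filter_univ_succ', Equiv.swap_apply_left, sum_add_distrib, ← card_filter,
    card_filter_eq_one_of_bijective hc, dropTransversal, add_comm]
  rfl

theorem exists_perm_forall_bijective [Fintype β] :
    ∀ {r : ℕ} (M : α × Fin r → β), (∀ y, #{p | M p = y} = r) →
      ∃ ρ : α → Equiv.Perm (Fin r), ∀ i, Function.Bijective fun w => M (w, ρ w i)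
  | 0, _, _ => ⟨1, fun i => i.elim0⟩
  | r + 1, M, hM => by
    obtain ⟨c, hc⟩ := exists_bijective_transversal r.succ_pos M hM
    obtain ⟨ρ, hρ⟩ := exists_perm_forall_bijective (dropTransversal M c) fun y =>
      Nat.add_right_cancel ((card_filter_dropTransversal_add_one M hc y).trans (hM y))
    refine ⟨fun w => Equiv.Perm.decomposeFin.symm (c w, ρ w), Fin.cases ?_ fun j => ?_⟩
    · simpa only [Equiv.Perm.decomposeFin_symm_apply_zero] using hc
    · simp only [Equiv.Perm.decomposeFin_symm_apply_succ]
      exact hρ j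

end RowPermutation

theorem row_permutation_hall_general (m r : ℕ)
    (M : Fin m × Fin r → Fin m)
    (hM : ∀ y : Fin m,
      (Finset.univ.filter (fun p : Fin m × Fin r => M p = y)).card = r) :
    ∃ ρ : Fin m → Equiv.Perm (Fin r),
      ∀ i : Fin r, Function.Bijective (fun w : Fin m => M (w, ρ w i)) :=
  RowPermutation.exists_perm_forall_bijective M hM

/-- **Row-permutation step via Hall's matching theorem.** Let `M : Fin m × Fin r → Fin m` be a
destination-row assignment attaining every value exactly `r` times. Then the entries within
each row can be permuted (by permutations `ρ w` of the column indices) so that afterwards every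
column contains each destination row label exactly once, i.e. for every column `i` the map
`w ↦ M (w, ρ w i)` is a bijection of `Fin m`. -/
theorem row_permutation_hall (m r : ℕ) (hm : 1 ≤ m) (hr : 1 ≤ r)
    (M : Fin m × Fin r → Fin m)
    (hM : ∀ y : Fin m,
      (Finset.univ.filter (fun p : Fin m × Fin r => M p = y)).card = r) :
    ∃ ρ : Fin m → Equiv.Perm (Fin r),
      ∀ i : Fin r, Function.Bijective (fun w : Fin m => M (w, ρ w i)) :=
  row_permutation_hall_general m r M hM
end

section
/- (Parallel insertion/odd-even sort on the path.) For every m ≥ 2, every permutation π of Fin m can be written as a composition π = σ_T ∘ ⋯ ∘ σ_1 of T ≤ 2m − 3 permutations, where each factor σ_t is a product of pairwise disjoint adjacent transpositions, i.e. for every x, σ_t(x) ∈ {x − 1, x, x + 1}. Thus on the 1D nearest-neighbour graph of m nodes, any permutation of the qubits can be implemented by parallel nearest-neighbour SWAP gates in depth 2m − 3. -/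
/-!
Pipelined bubble sort. To realise a permutation `π` that fixes every point `≥ k`, bubble the
point `a = π⁻¹ (k - 1)` up to `k - 1` by the swaps `(t, t + 1)` performed at the times
`t = a, …, k - 2`; what remains fixes `k - 1`, so by induction it is realised in `2k - 5`
rounds whose round `t` only moves points `< t + 2`. Delaying those rounds by two steps, round
`t` of the recursion moves only points `< t`, while the bubble acts at `t` and `t + 1` at time
`t`, and later bubble swaps lie even further right. Hence the two schedules merge into one of
depth `2k - 3` whose rounds are disjoint products of adjacent transpositions.
-/

open Equiv Function

namespace PathSorting

section Composite

variable {G : Type*} [Monoid G]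

def composite (σ : ℕ → G) (N : ℕ) : G := (List.ofFn fun t : Fin N => σ t).reverse.prod

@[simp] lemma composite_zero (σ : ℕ → G) : composite σ 0 = 1 := rfl

lemma composite_succ (σ : ℕ → G) (N : ℕ) : composite σ (N + 1) = σ N * composite σ N := by
  rw [composite, composite, List.ofFn_succ']
  simp

lemma composite_one (N : ℕ) : composite (fun _ => (1 : G)) N = 1 := by
  induction N with
  | zero => rfl
  | succ N ih => rw [composite_succ, ih, one_mul]

def delay (σ : ℕ → G) (d t : ℕ) : G := if d ≤ t then σ (t - d) else 1

lemma composite_delay (σ : ℕ → G) (d N : ℕ) : composite (delay σ d) N = composite σ (N - d) := by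
  induction N with
  | zero => simp
  | succ N ih =>
    rw [composite_succ, ih, delay]
    split_ifs with h
    · rw [show N + 1 - d = N - d + 1 by omega, composite_succ]
    · rw [one_mul, show N + 1 - d = N - d by omega]

lemma composite_eq_of_le {σ : ℕ → G} {M N : ℕ} (hσ : ∀ t, M ≤ t → σ t = 1) (h : M ≤ N) :
    composite σ N = composite σ M := by
  induction N, h using Nat.le_induction with
  | base => rfl
  | succ N hN ih => rw [composite_succ, hσ N hN, one_mul, ih]

lemma Commute.composite_right {x : G} {σ : ℕ → G} {N : ℕ} (h : ∀ t < N, Commute x (σ t)) :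
    Commute x (composite σ N) := by
  induction N with
  | zero => exact Commute.one_right x
  | succ N ih =>
    rw [composite_succ]
    exact (h N N.lt_succ_self).mul_right (ih fun t ht => h t (by omega))

lemma composite_mul {b c : ℕ → G} (h : ∀ s t, t < s → Commute (b s) (c t)) (N : ℕ) :
    composite (fun t => c t * b t) N = composite c N * composite b N := by
  induction N with
  | zero => simp
  | succ N ih =>
    have hN : Commute (b N) (composite c N) := Commute.composite_right (h N)
    rw [composite_succ, composite_succ, composite_succ, ih, mul_assoc, mul_assoc,
      hN.left_comm]

end Composite

lemma composite_apply_of_forall {α : Type*} {σ : ℕ → Perm α} {x : α} (h : ∀ t, σ t x = x)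
    (N : ℕ) : composite σ N x = x := by
  induction N with
  | zero => rfl
  | succ N ih => rw [composite_succ, Perm.mul_apply, ih, h]

variable {m : ℕ}

def IsLayer (σ : Perm (Fin m)) : Prop :=
  Involutive σ ∧ ∀ x, (σ x : ℕ) = x ∨ (σ x : ℕ) + 1 = x ∨ (σ x : ℕ) = x + 1

lemma isLayer_one : IsLayer (1 : Perm (Fin m)) := ⟨fun _ => rfl, fun _ => Or.inl rfl⟩

lemma IsLayer.mul {σ τ : Perm (Fin m)} (hσ : IsLayer σ) (hτ : IsLayer τ) (h : σ.Disjoint τ) :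
    IsLayer (σ * τ) := by
  refine ⟨fun x => ?_, fun x => ?_⟩
  · change (σ * τ * (σ * τ)) x = x
    rw [h.commute.symm.mul_mul_mul_comm, Perm.mul_apply, Perm.mul_apply, Perm.mul_apply, hτ.1,
      hσ.1]
  · rcases h x with hx | hx
    · rw [h.commute.eq, Perm.mul_apply, hx]; exact hτ.2 x
    · rw [Perm.mul_apply, hx]; exact hσ.2 x

lemma isLayer_delay {σ : ℕ → Perm (Fin m)} (hσ : ∀ t, IsLayer (σ t)) (d t : ℕ) :
    IsLayer (delay σ d t) := by
  unfold delay
  split_ifs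
  exacts [hσ _, isLayer_one]

lemma lt_of_delay_apply_ne {σ : ℕ → Perm (Fin m)} {d t : ℕ} {x : Fin m}
    (hσ : ∀ t x, σ t x ≠ x → (x : ℕ) < t + d) (h : delay σ d t x ≠ x) : (x : ℕ) < t := by
  unfold delay at h
  split_ifs at h
  · have := hσ _ _ h; omega
  · exact absurd rfl h

def adjSwap (i : ℕ) : Perm (Fin m) :=
  if h : i + 1 < m then swap ⟨i, by omega⟩ ⟨i + 1, h⟩ else 1

lemma adjSwap_apply_left {i : ℕ} (h : i + 1 < m) : adjSwap i ⟨i, by omega⟩ = ⟨i + 1, h⟩ := by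
  rw [adjSwap, dif_pos h, swap_apply_left]

lemma le_of_adjSwap_apply_ne {i : ℕ} {x : Fin m} (h : adjSwap i x ≠ x) :
    i ≤ x ∧ (x : ℕ) ≤ i + 1 := by
  unfold adjSwap at h
  split_ifs at h with hi
  · by_contra hx
    exact h (swap_apply_of_ne_of_ne (fun e => hx (by simp [e])) (fun e => hx (by simp [e])))
  · exact absurd rfl h

lemma isLayer_adjSwap (i : ℕ) : IsLayer (adjSwap i : Perm (Fin m)) := by
  unfold adjSwap
  split_ifs with h
  · refine ⟨swap_apply_self _ _, fun x => ?_⟩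
    rcases eq_or_ne x ⟨i, by omega⟩ with rfl | h₁
    · simp
    rcases eq_or_ne x ⟨i + 1, h⟩ with rfl | h₂
    · simp
    · simp [swap_apply_of_ne_of_ne h₁ h₂]
  · exact isLayer_one

def bubble (a n t : ℕ) : Perm (Fin m) := if a ≤ t ∧ t < n then adjSwap t else 1

lemma isLayer_bubble (a n t : ℕ) : IsLayer (bubble a n t : Perm (Fin m)) := by
  unfold bubble
  split_ifs
  exacts [isLayer_adjSwap t, isLayer_one]

lemma le_of_bubble_apply_ne {a n t : ℕ} {x : Fin m} (h : bubble a n t x ≠ x) :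
    t ≤ x ∧ (x : ℕ) ≤ t + 1 ∧ t < n := by
  unfold bubble at h
  split_ifs at h with ht
  · exact ⟨(le_of_adjSwap_apply_ne h).1, (le_of_adjSwap_apply_ne h).2, ht.2⟩
  · exact absurd rfl h

lemma composite_bubble_apply {n : ℕ} (hn : n < m) {x : Fin m} (hx : (x : ℕ) ≤ n) (N : ℕ) :
    (composite (bubble x n) N x : ℕ) = max (x : ℕ) (min N n) := by
  induction N with
  | zero => simp
  | succ N ih =>
    rw [composite_succ, Perm.mul_apply, bubble]
    split_ifs with hN
    · have hN' : composite (bubble x n) N x = ⟨N, by omega⟩ :=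
        Fin.ext (by rw [ih]; show _ = N; omega)
      rw [hN', adjSwap_apply_left (by omega), Fin.val_mk]
      omega
    · rw [Perm.one_apply, ih]
      omega

lemma disjoint_delay_bubble {σ : ℕ → Perm (Fin m)} (hσ : ∀ t x, σ t x ≠ x → (x : ℕ) < t + 2)
    (a n : ℕ) {s t : ℕ} (hts : t ≤ s) : (delay σ 2 t).Disjoint (bubble a n s) := by
  intro x
  by_contra! h
  have := lt_of_delay_apply_ne hσ h.1
  have := le_of_bubble_apply_ne h.2
  omega

lemma apply_composite_bubble_inv_apply {π : Perm (Fin m)} {n : ℕ} (hn : n < m)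
    (hπ : ∀ x : Fin m, n < x → π x = x) {x : Fin m} (hx : n ≤ x) :
    (π * (composite (bubble (π.symm ⟨n, hn⟩) n) n)⁻¹ : Perm (Fin m)) x = x := by
  set p : Fin m := ⟨n, hn⟩
  set a : Fin m := π.symm p
  have hp : (p : ℕ) = n := rfl
  have ha : (a : ℕ) ≤ n := by
    by_contra h
    have := congrArg Fin.val ((π.apply_symm_apply p).symm.trans (hπ a (by omega)))
    omega
  rcases hx.eq_or_lt with hx | hx
  · have hBa : composite (bubble a n) n a = p :=
      Fin.ext (by rw [composite_bubble_apply hn ha]; omega)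
    rw [show x = p from Fin.ext hx.symm, Perm.mul_apply, Perm.inv_eq_iff_eq.mpr hBa.symm,
      π.apply_symm_apply]
  · have hBx : composite (bubble a n) n x = x := composite_apply_of_forall (fun t =>
      by_contra fun h => by have := le_of_bubble_apply_ne h; omega) n
    rw [Perm.mul_apply, Perm.inv_eq_iff_eq.mpr hBx.symm, hπ x hx]

theorem exists_layer_decomposition (k : ℕ) (hk : k ≤ m) (π : Perm (Fin m))
    (hπ : ∀ x : Fin m, k ≤ x → π x = x) :
    ∃ σ : ℕ → Perm (Fin m), (∀ t, IsLayer (σ t)) ∧ (∀ t x, σ t x ≠ x → (x : ℕ) < t + 2) ∧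
      ∀ N, 2 * k - 3 ≤ N → composite σ N = π := by
  induction k generalizing π with
  | zero =>
    have hπ1 : π = 1 := Perm.ext fun x => hπ x (Nat.zero_le _)
    refine ⟨fun _ => 1, fun _ => isLayer_one, fun _ _ h => absurd rfl h, fun N _ => ?_⟩
    rw [composite_one, hπ1]
  | succ n ih =>
    obtain ⟨c, hc, hc_supp, hc_prod⟩ := ih (by omega) _ fun x hx =>
      apply_composite_bubble_inv_apply hk hπ hx
    set a : ℕ := (π.symm ⟨n, hk⟩).val
    have hdisj : ∀ s t, t ≤ s → (delay c 2 t).Disjoint (bubble a n s) :=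
      fun s t hts => disjoint_delay_bubble hc_supp a n hts
    refine ⟨fun t => delay c 2 t * bubble a n t, fun t => ?_, fun t x h => ?_, fun N hN => ?_⟩
    · exact (isLayer_delay hc 2 t).mul (isLayer_bubble a n t) (hdisj t t le_rfl)
    · rw [Ne, (hdisj t t le_rfl).mul_apply_eq_iff, not_and_or] at h
      rcases h with h | h
      · have := lt_of_delay_apply_ne hc_supp h; omega
      · have := le_of_bubble_apply_ne h; omega
    · rw [composite_mul (fun s t hts => (hdisj s t hts.le).commute.symm), composite_delay,
        hc_prod _ (by omega), composite_eq_of_le (M := n) (N := N) _ (by omega), inv_mul_cancel_right]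
      intro t ht
      rw [bubble, if_neg (by omega)]

end PathSorting

theorem path_parallel_sorting_general (m : ℕ) (π : Equiv.Perm (Fin m)) :
    ∃ T : ℕ, T ≤ 2 * m - 3 ∧
      ∃ σ : Fin T → Equiv.Perm (Fin m),
        (∀ t, (∀ x, σ t (σ t x) = x) ∧
          ∀ x : Fin m, ((σ t x : ℕ) = (x : ℕ) ∨ (σ t x : ℕ) + 1 = (x : ℕ) ∨
            (σ t x : ℕ) = (x : ℕ) + 1)) ∧
        π = (List.ofFn σ).reverse.prod := by
  obtain ⟨σ, hσ, -, hπ⟩ :=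
    PathSorting.exists_layer_decomposition m le_rfl π fun x hx => absurd x.2 (by omega)
  exact ⟨2 * m - 3, le_rfl, fun t => σ t, fun t => hσ t, (hπ _ le_rfl).symm⟩

/-- **Parallel insertion/odd–even sort on the path.** For `m ≥ 2`, every permutation `π` of
`Fin m` is a composition `σ_T ∘ ⋯ ∘ σ_1` of `T ≤ 2m - 3` permutations, each of which is a
product of pairwise disjoint adjacent transpositions: each `σ t` is an involution moving every
point by at most one position on the path (no wrap-around). -/
theorem path_parallel_sorting (m : ℕ) (hm : 2 ≤ m) (π : Equiv.Perm (Fin m)) :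
    ∃ T : ℕ, T ≤ 2 * m - 3 ∧
      ∃ σ : Fin T → Equiv.Perm (Fin m),
        (∀ t, (∀ x, σ t (σ t x) = x) ∧
          ∀ x : Fin m, ((σ t x : ℕ) = (x : ℕ) ∨ (σ t x : ℕ) + 1 = (x : ℕ) ∨
            (σ t x : ℕ) = (x : ℕ) + 1)) ∧
        π = (List.ofFn σ).reverse.prod :=
  path_parallel_sorting_general m π
end

section
/- (Bitonic sort on the hypercube.) For every r ≥ 1, every permutation π of the set of r-bit words (Fin r → Bool) can be written as a composition π = σ_T ∘ ⋯ ∘ σ_1 of T ≤ r(r+1)/2 permutations, where for each factor σ_t there is a single dimension d_t ∈ Fin r such that for every word x, σ_t(x) ∈ {x, x ⊕ e_{d_t}}. Thus on the 2^r-node hypercube, any permutation of the qubits can be implemented by parallel SWAP gates along hypercube edges in depth (1/2)·log₂ n·(log₂ n + 1), where n = 2^r. -/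
/-- The `r`-bit word obtained from `x` by flipping bit `d` (i.e. `x ⊕ e_d`). -/
def flipBit (r : ℕ) (d : Fin r) (x : Fin r → Bool) : Fin r → Bool :=
  Function.update x d (!x d)

/-!
The proof goes through the Beneš network rather than bitonic sorting. A permutation `π` of
`Bool × A`, for `A` finite, factors as a column of switches `(m, a) ↦ (m xor f a, a)`, then a
permutation of each of the two copies of `A`, then a second column of switches. The switch
settings are read off a set `S` that meets every input pair `{(0, a), (1, a)}` and every output
pair `π⁻¹ {(0, c), (1, c)}` exactly once: `S` is a perfect matching of the bipartite multigraph
joining `a` to the `A`-coordinates of `π (0, a)` and `π (1, a)`, which is `2`-regular, so Hall's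
theorem provides it. Splitting off the first bit of an `(r + 1)`-bit word and recursing on both
halves along one common list of dimensions gives `2 r + 1` layers, and
`2 r + 1 ≤ (r + 1) (r + 2) / 2`.
-/

open Equiv Function Finset

lemma prod_reverse_ofFn_pi {ι M : Type*} [Monoid M] {n : ℕ} (σ : ι → Fin n → M) :
    (List.ofFn fun t m => σ m t).reverse.prod = fun m => (List.ofFn (σ m)).reverse.prod := by
  funext m
  simp [Pi.list_prod_apply, List.map_reverse, List.map_ofFn, comp_def]

namespace Benes

variable {A : Type*}

def switchLayer (f : A → Bool) : Perm (Bool × A) :=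
  Involutive.toPerm (fun q => (xor (f q.2) q.1, q.2)) fun q => by simp

@[simp]
lemma switchLayer_apply (f : A → Bool) (q : Bool × A) :
    switchLayer f q = (xor (f q.2) q.1, q.2) :=
  rfl

lemma switchLayer_mul_self (f : A → Bool) : switchLayer f * switchLayer f = 1 := by
  ext q <;> simp

def fiberwise {ι : Type*} : (ι → Perm A) →* Perm (ι × A) where
  toFun := prodCongrRight
  map_one' := by ext <;> simp
  map_mul' _ _ := by ext <;> simp

@[simp]
lemma fiberwise_apply {ι : Type*} (p : ι → Perm A) (q : ι × A) :
    fiberwise p q = (q.1, p q.1 q.2) :=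
  rfl

lemma exists_fiberwise_eq {ι : Type*} {ρ : Perm (ι × A)} (hρ : ∀ q, (ρ q).1 = q.1) :
    ∃ p, fiberwise p = ρ := by
  have hρ_symm (q : ι × A) : (ρ.symm q).1 = q.1 := by
    simpa using (hρ (ρ.symm q)).symm
  refine ⟨fun i =>
    ⟨fun a => (ρ (i, a)).2, fun a => (ρ.symm (i, a)).2, fun a => ?_, fun a => ?_⟩,
    Equiv.ext fun q => Prod.ext (hρ q).symm rfl⟩
  · show (ρ.symm (i, (ρ (i, a)).2)).2 = a
    rw [show (i, (ρ (i, a)).2) = ρ (i, a) from Prod.ext (hρ (i, a)).symm rfl, symm_apply_apply]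
  · show (ρ (i, (ρ.symm (i, a)).2)).2 = a
    rw [show (i, (ρ.symm (i, a)).2) = ρ.symm (i, a) from Prod.ext (hρ_symm (i, a)).symm rfl,
      apply_symm_apply]

lemma exists_injective_selection [Finite A] (π : Perm (Bool × A)) :
    ∃ b : A → Bool, Injective fun a => (π (b a, a)).2 := by
  classical
  have := Fintype.ofFinite A
  let t (a : A) : Finset A := {(π (false, a)).2, (π (true, a)).2}
  have hall (s : Finset A) : #s ≤ #(s.biUnion t) := by
    have hπ : #((univ : Finset Bool) ×ˢ s) ≤ #((univ : Finset Bool) ×ˢ s.biUnion t) := by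
      refine card_le_card_of_injOn π (fun q hq => ?_) π.injective.injOn
      obtain ⟨-, hs⟩ := mem_product.1 hq
      refine mem_product.2 ⟨mem_univ _, mem_biUnion.2 ⟨q.2, hs, ?_⟩⟩
      rcases q with ⟨_ | _, a⟩ <;> simp [t]
    simpa using hπ
  obtain ⟨F, hF, hFt⟩ := (all_card_le_biUnion_card_iff_exists_injective t).1 hall
  have hsel (a : A) : ∃ m, (π (m, a)).2 = F a := by
    rcases mem_insert.1 (hFt a) with h | h
    · exact ⟨false, h.symm⟩
    · exact ⟨true, (mem_singleton.1 h).symm⟩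
  choose b hb using hsel
  exact ⟨b, by simpa only [hb] using hF⟩

def IsBalanced (χ : Bool × A → Bool) : Prop :=
  ∀ a, χ (false, a) ≠ χ (true, a)

lemma IsBalanced.apply_eq {χ : Bool × A → Bool} (hχ : IsBalanced χ) (q : Bool × A) :
    χ q = (switchLayer (fun a => χ (false, a)) q).1 := by
  rcases q with ⟨_ | _, a⟩
  · simp
  · simpa using Bool.eq_not.2 (hχ a).symm

lemma exists_isBalanced [Finite A] (π : Perm (Bool × A)) :
    ∃ χ : Bool × A → Bool, IsBalanced χ ∧ IsBalanced (χ ∘ π.symm) := by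
  obtain ⟨b, hb⟩ := exists_injective_selection π
  have hb_surj := (Finite.injective_iff_bijective.1 hb).2
  refine ⟨fun q => q.1 == b q.2, fun a => by cases b a <;> simp, fun c => ?_⟩
  obtain ⟨a, rfl⟩ := hb_surj c
  set m := (π (b a, a)).1
  have h_sel : π.symm (m, (π (b a, a)).2) = (b a, a) := π.symm_apply_apply _
  have h_other : (π.symm (!m, (π (b a, a)).2)).1 ≠ b (π.symm (!m, (π (b a, a)).2)).2 := by
    set q := π.symm (!m, (π (b a, a)).2) with hq
    intro h
    have hπq : π (b q.2, q.2) = (!m, (π (b a, a)).2) := by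
      rw [← h, Prod.mk.eta, hq, apply_symm_apply]
    have hqa : q.2 = a := hb (congrArg Prod.snd hπq :)
    rw [hqa] at hπq
    simpa [m] using congrArg Prod.fst hπq
  cases hm : m <;> simp_all

theorem exists_eq_switchLayer_mul_fiberwise_mul [Finite A] (π : Perm (Bool × A)) :
    ∃ (f g : A → Bool) (p : Bool → Perm A),
      π = switchLayer g * fiberwise p * switchLayer f := by
  obtain ⟨χ, hin, hout⟩ := exists_isBalanced π
  set f := fun a => χ (false, a)
  set g := fun c => χ (π.symm (false, c))
  have hfib (q : Bool × A) : ((switchLayer g * π * switchLayer f) q).1 = q.1 := by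
    calc ((switchLayer g * π * switchLayer f) q).1
        = (χ ∘ π.symm) (π (switchLayer f q)) := (hout.apply_eq _).symm
      _ = χ (switchLayer f q) := by simp
      _ = (switchLayer f (switchLayer f q)).1 := hin.apply_eq _
      _ = q.1 := by rw [← Perm.mul_apply, switchLayer_mul_self, Perm.one_apply]
  obtain ⟨p, hp⟩ := exists_fiberwise_eq hfib
  refine ⟨f, g, p, ?_⟩
  calc π = switchLayer g * switchLayer g * π * (switchLayer f * switchLayer f) := by
        rw [switchLayer_mul_self, switchLayer_mul_self, one_mul, mul_one]
    _ = switchLayer g * fiberwise p * switchLayer f := by simp only [hp, mul_assoc]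

end Benes

open Benes

lemma flipBit_zero_cons {r : ℕ} (b : Bool) (w : Fin r → Bool) :
    flipBit (r + 1) 0 (Fin.cons b w) = Fin.cons (!b) w := by
  simp [flipBit, Fin.update_cons_zero]

lemma flipBit_succ_cons {r : ℕ} (d : Fin r) (b : Bool) (w : Fin r → Bool) :
    flipBit (r + 1) d.succ (Fin.cons b w) = Fin.cons b (flipBit r d w) := by
  simp [flipBit, Fin.cons_update]

namespace Hypercube

abbrev consBit (r : ℕ) : Bool × (Fin r → Bool) ≃ (Fin (r + 1) → Bool) :=
  Fin.consEquiv fun _ => Bool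

variable {r : ℕ}

@[simp]
lemma consBit_apply (q : Bool × (Fin r → Bool)) : consBit r q = Fin.cons q.1 q.2 :=
  rfl

def ActsAlong (d : Fin r) (σ : Perm (Fin r → Bool)) : Prop :=
  ∀ x, σ x = x ∨ σ x = flipBit r d x

lemma actsAlong_of_one (σ : Perm (Fin 1 → Bool)) : ActsAlong 0 σ := by
  have key : ∀ y x : Fin 1 → Bool, y = x ∨ y = flipBit 1 0 x := by decide
  exact fun x => key (σ x) x

lemma actsAlong_zero_switchLayer (f : (Fin r → Bool) → Bool) :
    ActsAlong 0 ((consBit r).permCongrHom (switchLayer f)) := by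
  intro x
  induction x using Fin.consCases with
  | cons b w => cases hf : f w <;> simp [hf, flipBit_zero_cons]

lemma actsAlong_succ_fiberwise {d : Fin r} {p : Bool → Perm (Fin r → Bool)}
    (hp : ∀ m, ActsAlong d (p m)) :
    ActsAlong d.succ ((consBit r).permCongrHom (fiberwise p)) := by
  intro x
  induction x using Fin.consCases with
  | cons b w => rcases hp b w with h | h <;> simp [h, flipBit_succ_cons]

def IsRearrangeable {n : ℕ} (ds : Fin n → Fin r) : Prop :=
  ∀ π : Perm (Fin r → Bool), ∃ σ : Fin n → Perm (Fin r → Bool),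
    (∀ t, ActsAlong (ds t) (σ t)) ∧ π = (List.ofFn σ).reverse.prod

lemma isRearrangeable_one : IsRearrangeable (fun _ : Fin 1 => (0 : Fin 1)) :=
  fun π => ⟨fun _ => π, fun _ => actsAlong_of_one π, by simp⟩

theorem IsRearrangeable.cons_snoc {n : ℕ} {ds : Fin n → Fin r} (h : IsRearrangeable ds) :
    IsRearrangeable
      (Fin.cons 0 (Fin.snoc (Fin.succ ∘ ds) 0) : Fin (n + 1 + 1) → Fin (r + 1)) := by
  intro π
  let lift := (consBit r).permCongrHom
  obtain ⟨f, g, p, hπ⟩ := exists_eq_switchLayer_mul_fiberwise_mul (lift.symm π)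
  choose σ hσ hp using fun m => h (p m)
  refine ⟨Fin.cons (lift (switchLayer f))
    (Fin.snoc (fun t => lift (fiberwise fun m => σ m t)) (lift (switchLayer g))), ?_, ?_⟩
  · refine Fin.cases (actsAlong_zero_switchLayer f) (Fin.lastCases ?_ fun t => ?_)
    · simpa only [Fin.cons_succ, Fin.snoc_last] using actsAlong_zero_switchLayer g
    · simpa only [Fin.cons_succ, Fin.snoc_castSucc, comp_apply] using
        actsAlong_succ_fiberwise fun m => hσ m t
  · have hmid : (List.ofFn fun t => lift (fiberwise fun m => σ m t)).reverse.prod =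
        lift (fiberwise p) := by
      calc _ = lift (fiberwise (List.ofFn fun t m => σ m t).reverse.prod) := by
            simp [map_list_prod, List.map_reverse, List.map_ofFn, comp_def]
        _ = lift (fiberwise p) := by
            rw [prod_reverse_ofFn_pi]
            simp_rw [← hp]
    rw [List.ofFn_cons, List.ofFn_succ_last]
    simp only [Fin.snoc_castSucc, Fin.snoc_last, List.reverse_cons, List.reverse_append,
      List.prod_append, hmid, List.reverse_nil, List.prod_cons, List.prod_nil, one_mul, mul_one]
    rw [← map_mul, ← map_mul, ← hπ, MulEquiv.apply_symm_apply]

theorem exists_isRearrangeable (r : ℕ) :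
    ∃ ds : Fin (2 * r + 1) → Fin (r + 1), IsRearrangeable ds := by
  induction r with
  | zero => exact ⟨_, isRearrangeable_one⟩
  | succ r ih =>
    obtain ⟨ds, hds⟩ := ih
    exact ⟨_, hds.cons_snoc⟩

end Hypercube

open Hypercube in
theorem hypercube_bitonic_sorting_general (r : ℕ)
    (π : Equiv.Perm (Fin r → Bool)) :
    ∃ T : ℕ, T ≤ r * (r + 1) / 2 ∧
      ∃ σ : Fin T → Equiv.Perm (Fin r → Bool),
        (∀ t, ∃ d : Fin r, ∀ x, σ t x = x ∨ σ t x = flipBit r d x) ∧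
        π = (List.ofFn σ).reverse.prod := by
  cases r with
  | zero => exact ⟨0, le_rfl, Fin.elim0, nofun, Subsingleton.elim _ _⟩
  | succ r =>
    obtain ⟨ds, hds⟩ := exists_isRearrangeable r
    obtain ⟨σ, hσ, hπ⟩ := hds π
    refine ⟨2 * r + 1, ?_, σ, fun t => ⟨ds t, hσ t⟩, hπ⟩
    rw [Nat.le_div_iff_mul_le two_pos]
    nlinarith [Nat.le_mul_self r]

/-- **Bitonic sort on the hypercube.** For `r ≥ 1`, every permutation `π` of the `r`-bit words
is a composition `σ_T ∘ ⋯ ∘ σ_1` of `T ≤ r(r+1)/2` permutations, where each factor `σ t` acts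
along a single hypercube dimension `d`: every word is fixed or has bit `d` flipped. Hence a
`2^r`-node hypercube sorts in depth `(1/2)·log₂ n·(log₂ n + 1)`. -/
theorem hypercube_bitonic_sorting (r : ℕ) (hr : 1 ≤ r)
    (π : Equiv.Perm (Fin r → Bool)) :
    ∃ T : ℕ, T ≤ r * (r + 1) / 2 ∧
      ∃ σ : Fin T → Equiv.Perm (Fin r → Bool),
        (∀ t, ∃ d : Fin r, ∀ x, σ t x = x ∨ σ t x = flipBit r d x) ∧
        π = (List.ofFn σ).reverse.prod :=
  hypercube_bitonic_sorting_general r π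
end

section
/- (Beneš rearrangeability.) For every r ≥ 1, every permutation π of the set of r-bit words (Fin r → Bool) can be written as a composition π = σ_{2r} ∘ ⋯ ∘ σ_1 of exactly 2r permutations such that for each step t (1 ≤ t ≤ 2r) and every word x, σ_t(x) ∈ {x, x ⊕ e_{b_t}}, where the fixed dimension schedule is b_t = t − 1 for 1 ≤ t ≤ r and b_t = 2r − t for r < t ≤ 2r (i.e., dimensions 0, 1, …, r−1 followed by r−1, …, 1, 0). In other words, the Beneš network formed by traversing a butterfly forward and then backward can realize every permutation of its 2^r rows without collisions. -/
/-- The fixed Beneš dimension schedule: dimensions `0, 1, …, r-1` followed by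
`r-1, …, 1, 0` (steps indexed from `0` to `2r - 1`). -/
def benesDim (r : ℕ) (t : Fin (2 * r)) : Fin r :=
  ⟨if (t : ℕ) < r then (t : ℕ) else 2 * r - 1 - (t : ℕ), by
    have := t.isLt; split <;> omega⟩

/-!
Induction on `r`, splitting off bit `0`: a permutation of `(r + 1)`-bit words is a permutation
`π` of `Bool × A`, with `A` the words on the other bits. Joining input switch `a` to the output
switches of `π (false, a)` and `π (true, a)` gives a 2-regular bipartite multigraph; by Hall's
theorem it has a perfect matching, whose complement is another one. Coloring the edges
accordingly yields a first and a last layer of switches on bit `0` between which `π` preserves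
the color, i.e. acts as two independent permutations of `A`. These are routed recursively, in
parallel, on the other bits.
-/

open Equiv Function Finset

theorem map_prod_reverse_ofFn {M N F : Type*} [Monoid M] [Monoid N] [FunLike F M N]
    [MonoidHomClass F M N] (φ : F) {n : ℕ} (f : Fin n → M) :
    φ (List.ofFn f).reverse.prod = (List.ofFn fun i => φ (f i)).reverse.prod := by
  simp only [map_list_prod, List.map_reverse, List.map_ofFn, comp_def]

namespace Equiv.Perm

def prodCongrRightHom (α β : Type*) : (α → Perm β) →* Perm (α × β) :=
  MonoidHom.mk' (fun M => prodCongrRight M) fun M N => by ext ⟨a, b⟩ <;> rfl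

theorem prodCongrRight_eq_prod_reverse_ofFn {α β : Type*} {n : ℕ} {M : α → Perm β}
    {s : α → Fin n → Perm β} (hs : ∀ a, M a = (List.ofFn (s a)).reverse.prod) :
    prodCongrRight M = (List.ofFn fun i => prodCongrRight fun a => s a i).reverse.prod := by
  have hM : M = (List.ofFn fun i a => s a i).reverse.prod :=
    funext fun a => by
      rw [hs a]; exact (map_prod_reverse_ofFn (Pi.evalMonoidHom _ a) fun i a => s a i).symm
  exact hM ▸ map_prod_reverse_ofFn (prodCongrRightHom α β) _

theorem exists_eq_prodCongrRight_of_fst_apply_eq {α β : Type*} (N : Perm (α × β))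
    (h : ∀ p, (N p).1 = p.1) : ∃ M : α → Perm β, N = prodCongrRight M := by
  have hN : ∀ p, N p = (p.1, (N p).2) := fun p => Prod.ext (h p) rfl
  have hsymm : ∀ p, N.symm p = (p.1, (N.symm p).2) := fun p =>
    Prod.ext (by simpa using (h (N.symm p)).symm) rfl
  refine ⟨fun a => ⟨fun b => (N (a, b)).2, fun b => (N.symm (a, b)).2, fun b => ?_,
    fun b => ?_⟩, Equiv.ext fun ⟨a, b⟩ => hN (a, b)⟩
  · simp [← hN (a, b)]
  · simp [← hsymm (a, b)]

variable {A : Type*} [Finite A]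

theorem exists_bijective_snd_apply (π : Perm (Bool × A)) :
    ∃ b : A → Bool, Bijective fun a => (π (b a, a)).2 := by
  classical
  have := Fintype.ofFinite A
  let t : A → Finset A := fun a => {(π (false, a)).2, (π (true, a)).2}
  have hall : ∀ s : Finset A, #s ≤ #(s.biUnion t) := by
    intro s
    have : #((univ : Finset Bool) ×ˢ s) ≤ #((univ : Finset Bool) ×ˢ s.biUnion t) := by
      refine card_le_card_of_injOn π (fun ⟨β, a⟩ hp => ?_) π.injective.injOn
      simp only [coe_product, coe_univ, Set.mem_prod, Set.mem_univ, true_and, mem_coe,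
        mem_biUnion] at hp ⊢
      exact ⟨a, hp, by cases β <;> simp [t]⟩
    simpa [card_product] using this
  obtain ⟨f, hf, hft⟩ := (all_card_le_biUnion_card_iff_existsInjective' t).1 hall
  have hmatch : ∀ a, ∃ β, (π (β, a)).2 = f a := by
    intro a
    rcases mem_insert.1 (hft a) with h | h
    exacts [⟨false, h.symm⟩, ⟨true, (mem_singleton.1 h).symm⟩]
  choose b hb using hmatch
  exact ⟨b, Finite.injective_iff_bijective.1 (by simpa [hb] using hf)⟩

theorem exists_coloring_injective_on_fibers (π : Perm (Bool × A)) :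
    ∃ c : Bool × A → Bool,
      (∀ a, Injective fun β => c (β, a)) ∧
        ∀ a, Injective fun β => c (π.symm (β, a)) := by
  obtain ⟨b, hb⟩ := exists_bijective_snd_apply π
  -- color the matched inputs `(b a, a)` with `true`: each output switch receives exactly one
  refine ⟨fun p => p.1 == b p.2, fun a => Bool.injective_iff.2 ?_,
    fun a => Bool.injective_iff.2 ?_⟩
  · cases b a <;> simp
  obtain ⟨a₀, ha₀ : (π (b a₀, a₀)).2 = a⟩ := hb.2 a
  obtain ⟨γ, hγ⟩ : ∃ γ, π.symm (γ, a) = (b a₀, a₀) :=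
    ⟨(π (b a₀, a₀)).1, π.symm_apply_eq.2 (by rw [← ha₀])⟩
  have hnγ : (π.symm (!γ, a)).1 ≠ b (π.symm (!γ, a)).2 := by
    set p := π.symm (!γ, a) with hp_def
    intro h
    have hp : p = (b p.2, p.2) := Prod.ext h rfl
    have hp₂ : p.2 = a₀ := hb.1 <| by
      change (π (b p.2, p.2)).2 = (π (b a₀, a₀)).2
      rw [← hp, ha₀, hp_def, apply_symm_apply]
    rw [hp₂, ← hγ, hp_def] at hp
    simpa using π.symm.injective hp
  cases γ <;> simp_all

theorem exists_eq_prodCongrLeft_mul_prodCongrRight_mul_prodCongrLeft (π : Perm (Bool × A)) :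
    ∃ (L : A → Perm Bool) (M : Bool → Perm A) (F : A → Perm Bool),
      π = prodCongrLeft L * prodCongrRight M * prodCongrLeft F := by
  obtain ⟨c, hin, hout⟩ := exists_coloring_injective_on_fibers π
  -- `F` and `G` color the inputs and the outputs of `π`, so `G * π * F⁻¹` preserves colors
  let F a := ofBijective _ (Finite.injective_iff_bijective.1 (hin a))
  let G a := ofBijective _ (Finite.injective_iff_bijective.1 (hout a))
  obtain ⟨M, hM⟩ := exists_eq_prodCongrRight_of_fst_apply_eq
    (prodCongrLeft G * π * (prodCongrLeft F)⁻¹) fun p => by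
      obtain ⟨q, rfl⟩ := (prodCongrLeft F).surjective p
      rw [mul_apply, mul_apply, inv_def, symm_apply_apply]
      simp [F, G]
  refine ⟨fun a => (G a)⁻¹, M, F, ?_⟩
  rw [← hM, show prodCongrLeft (fun a => (G a)⁻¹) = (prodCongrLeft G)⁻¹ from rfl]
  group

end Equiv.Perm

def IsSwitchLayer (r : ℕ) (d : Fin r) (σ : Perm (Fin r → Bool)) : Prop :=
  ∀ x, σ x = x ∨ σ x = flipBit r d x

theorem isSwitchLayer_iff {r : ℕ} {d : Fin r} {σ : Perm (Fin r → Bool)} :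
    IsSwitchLayer r d σ ↔ ∀ x, ∀ i ≠ d, σ x i = x i := by
  refine forall_congr' fun x => ⟨?_, fun h => ?_⟩
  · rintro (h | h) i hi <;> simp [h, flipBit, update_of_ne hi]
  · by_cases hd : σ x d = x d
    · exact .inl <| funext fun i => if hi : i = d then hi ▸ hd else h i hi
    · refine .inr <| funext fun i => ?_
      by_cases hi : i = d
      · subst hi; simpa [flipBit, Bool.eq_not_iff] using hd
      · simp [flipBit, update_of_ne hi, h i hi]

theorem isSwitchLayer_permCongr_prodCongrLeft {r : ℕ} (F : (Fin r → Bool) → Perm Bool) :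
    IsSwitchLayer (r + 1) 0 ((Fin.consEquiv fun _ => Bool).permCongrHom (prodCongrLeft F)) :=
  isSwitchLayer_iff.2 fun x i hi => by
    obtain ⟨j, rfl⟩ := Fin.exists_succ_eq.2 hi
    simp [Fin.tail]

theorem IsSwitchLayer.permCongr_prodCongrRight {r : ℕ} {d : Fin r}
    {M : Bool → Perm (Fin r → Bool)} (hM : ∀ β, IsSwitchLayer r d (M β)) :
    IsSwitchLayer (r + 1) d.succ ((Fin.consEquiv fun _ => Bool).permCongrHom (prodCongrRight M)) :=
  isSwitchLayer_iff.2 fun x i hi => by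
    cases i using Fin.cases with
    | zero => simp
    | succ j =>
      simpa [Fin.tail] using isSwitchLayer_iff.1 (hM (x 0)) (Fin.tail x) j (by simpa using hi)

def BenesRealizes (r : ℕ) (π : Perm (Fin r → Bool)) : Prop :=
  ∃ σ : Fin (2 * r) → Perm (Fin r → Bool),
    (∀ t, IsSwitchLayer r (benesDim r t) (σ t)) ∧ π = (List.ofFn σ).reverse.prod

theorem benesDim_succ_zero (r : ℕ) : benesDim (r + 1) (0 : Fin (2 * r + 1 + 1)) = 0 := rfl

theorem benesDim_succ_last (r : ℕ) : benesDim (r + 1) (Fin.last (2 * r)).succ = 0 :=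
  Fin.ext <| by simp [benesDim]; split_ifs <;> omega

theorem benesDim_succ_castSucc_succ (r : ℕ) (i : Fin (2 * r)) :
    benesDim (r + 1) i.castSucc.succ = (benesDim r i).succ :=
  Fin.ext <| by simp [benesDim]; split_ifs <;> omega

theorem benesRealizes_succ {r : ℕ} (L F : (Fin r → Bool) → Perm Bool)
    {M : Bool → Perm (Fin r → Bool)} (hM : ∀ β, BenesRealizes r (M β)) :
    BenesRealizes (r + 1) ((Fin.consEquiv fun _ => Bool).permCongrHom
      (prodCongrLeft L * prodCongrRight M * prodCongrLeft F)) := by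
  choose s hs hsM using hM
  let e := (Fin.consEquiv fun _ : Fin (r + 1) => Bool).permCongrHom
  refine ⟨(Fin.cons (e (prodCongrLeft F)) (Fin.snoc (fun i => e (prodCongrRight fun β => s β i))
    (e (prodCongrLeft L))) : Fin (2 * r + 1 + 1) → _), ?_, ?_⟩
  · refine Fin.cases (n := 2 * r + 1) ?_ (Fin.lastCases (n := 2 * r) ?_ fun i => ?_)
    · rw [Fin.cons_zero, benesDim_succ_zero]
      exact isSwitchLayer_permCongr_prodCongrLeft F
    · rw [Fin.cons_succ, Fin.snoc_last, benesDim_succ_last]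
      exact isSwitchLayer_permCongr_prodCongrLeft L
    · rw [Fin.cons_succ, Fin.snoc_castSucc, benesDim_succ_castSucc_succ]
      exact IsSwitchLayer.permCongr_prodCongrRight fun β => hs β i
  · rw [List.ofFn_cons, List.ofFn_succ_last]
    simp only [Fin.snoc_castSucc, Fin.snoc_last, List.reverse_cons, List.reverse_append,
      List.prod_append, List.prod_cons, List.prod_nil, List.reverse_nil, List.nil_append, mul_one,
      Perm.prodCongrRight_eq_prod_reverse_ofFn hsM, map_mul, map_prod_reverse_ofFn, mul_assoc, e]

theorem benes_rearrangeable_general (r : ℕ) (π : Equiv.Perm (Fin r → Bool)) :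
    ∃ σ : Fin (2 * r) → Equiv.Perm (Fin r → Bool),
      (∀ t : Fin (2 * r), ∀ x, σ t x = x ∨ σ t x = flipBit r (benesDim r t) x) ∧
      π = (List.ofFn σ).reverse.prod := by
  induction r with
  | zero => exact ⟨Fin.elim0, fun t => t.elim0, Subsingleton.elim _ _⟩
  | succ r ih =>
    let e := (Fin.consEquiv fun _ : Fin (r + 1) => Bool).permCongrHom
    obtain ⟨L, M, F, hπ⟩ :=
      Perm.exists_eq_prodCongrLeft_mul_prodCongrRight_mul_prodCongrLeft (e.symm π)
    rw [e.symm_apply_eq.1 hπ]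
    exact benesRealizes_succ L F fun β => ih (M β)

/-- **Beneš rearrangeability.** For `r ≥ 1`, every permutation `π` of the `r`-bit words is a
composition `σ_{2r} ∘ ⋯ ∘ σ_1` of exactly `2r` permutations, where step `t` only moves words
along hypercube dimension `benesDim r t` (dimensions `0, …, r-1, r-1, …, 0`): the Beneš network
realizes every permutation of its `2^r` rows without collisions. -/
theorem benes_rearrangeable (r : ℕ) (hr : 1 ≤ r) (π : Equiv.Perm (Fin r → Bool)) :
    ∃ σ : Fin (2 * r) → Equiv.Perm (Fin r → Bool),
      (∀ t : Fin (2 * r), ∀ x, σ t x = x ∨ σ t x = flipBit r (benesDim r t) x) ∧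
      π = (List.ofFn σ).reverse.prod :=
  benes_rearrangeable_general r π
end

section
/- (Pipelined simultaneous column permutations on the cyclic butterfly.) Let r ≥ 1 and let B_r be the r-dimensional cyclic butterfly graph. For every family (τ_i)_{i ∈ ZMod r} of permutations of the r-bit words, the permutation Π of the vertex set of B_r defined by Π(w, i) = (τ_i(w), i) can be written as a composition Π = σ_{2r} ∘ ⋯ ∘ σ_1 of 2r permutations of the vertex set, where each factor σ_t maps every vertex either to itself or to an adjacent vertex of B_r, each vertex moved by σ_t for t ≤ r has its column label incremented by 1 (mod r), and each vertex moved by σ_t for t > r has its column label decremented by 1 (mod r). Thus all r columns can simultaneously permute their 2^r entries in only 2r local steps. -/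
/-- Two `r`-bit words differ in exactly the bit whose index corresponds to column `i`. -/
def diffAtCol (r : ℕ) (w v : Fin r → Bool) (i : ZMod r) : Prop :=
  ∀ k : Fin r, w k ≠ v k ↔ ((k : ℕ) : ZMod r) = i

/-- The `r`-dimensional cyclic butterfly graph. -/
def cyclicButterfly (r : ℕ) : SimpleGraph ((Fin r → Bool) × ZMod r) where
  Adj a b := a ≠ b ∧
    ((b.2 = a.2 + 1 ∧ (a.1 = b.1 ∨ diffAtCol r a.1 b.1 a.2)) ∨
     (a.2 = b.2 + 1 ∧ (a.1 = b.1 ∨ diffAtCol r a.1 b.1 b.2)))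
  symm := by
    constructor
    rintro a b ⟨hne, h⟩
    refine ⟨hne.symm, ?_⟩
    rcases h with ⟨h1, h2⟩ | ⟨h1, h2⟩
    · exact Or.inr ⟨h1, h2.imp Eq.symm (fun hd k => ne_comm.trans (hd k))⟩
    · exact Or.inl ⟨h1, h2.imp Eq.symm (fun hd k => ne_comm.trans (hd k))⟩
  loopless := ⟨fun a h => h.1 rfl⟩

/-!
A permutation `π` of `r`-bit words that touches only the bits `k₀, …, kₙ₋₁` factors as
`a₀ ⋯ aₙ₋₁ bₙ₋₁ ⋯ b₀`, where `aₜ` and `bₜ` change at most bit `kₜ` (Beneš). To split off `a₀`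
and `b₀`, colour the words so that `x` and `flip x`, and also `x` and `π⁻¹ (flip (π x))`, get
different colours; this is possible because the two fixed-point-free involutions generate a graph
all of whose cycles are even. Then `b₀` writes the colour of `w` into bit `k₀`, and `a₀` writes the
colour of `π⁻¹ u` into bit `k₀` of `u`, so `a₀ π b₀` no longer changes bit `k₀`.

For the column permutation `τ i` take `kₜ` to be the bit of column `i + t`. The row starting in
column `i` applies `b₀, …, b_{r-1}` while walking once around the columns, each step along a
butterfly edge, and `a_{r-1}, …, a₀` while walking back. All rows walk in lockstep, so each step is
a permutation of the vertex set.
-/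

open Equiv Function

section Switches

variable {ι : Type*}

def IsSwitchAt (k : ι) (g : Perm (ι → Bool)) : Prop :=
  ∀ w, ∀ j ≠ k, g w j = w j

theorem IsSwitchAt.inv {k : ι} {g : Perm (ι → Bool)} (h : IsSwitchAt k g) :
    IsSwitchAt k g⁻¹ := fun w j hj => by
  simpa using (h (g⁻¹ w) j hj).symm

variable [DecidableEq ι]

def flipAt (k : ι) : Perm (ι → Bool) :=
  Involutive.toPerm (fun w => update w k (!w k)) fun w => by simp

@[simp]
theorem flipAt_apply (k : ι) (w : ι → Bool) : flipAt k w = update w k (!w k) := rfl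

theorem flipAt_flipAt (k : ι) (w : ι → Bool) : flipAt k (flipAt k w) = w :=
  (flipAt k).left_inv w

theorem flipAt_ne_self (k : ι) (w : ι → Bool) : flipAt k w ≠ w := fun h => by
  simpa using congrFun h k

theorem exists_isSwitchAt_apply_eq (k : ι) {d : (ι → Bool) → Bool}
    (hd : ∀ u, d (flipAt k u) = !d u) :
    ∃ f : Perm (ι → Bool), IsSwitchAt k f ∧ (∀ u, f u k = d u) ∧ ∀ u, d (f u) = u k := by
  have hset : ∀ u, d (update u k (d u)) = u k := by
    intro u
    by_cases h : d u = u k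
    · rw [h, update_eq_self, h]
    · have hflip := hd u
      rw [Bool.eq_not_iff.mpr h] at hflip ⊢
      simpa using hflip
  have hinv : Involutive fun u => update u k (d u) := fun u => by
    simp only [hset, update_idem, update_eq_self]
  exact ⟨hinv.toPerm _, fun u j hj => update_of_ne hj _ _, fun u => update_self _ _ _, hset⟩

end Switches

theorem Function.Involutive.exists_bool_apply_eq_not {Y : Type*} {f : Y → Y}
    (hf : Involutive f) (hfix : ∀ y, f y ≠ y) : ∃ T : Y → Bool, ∀ y, T (f y) = !T y := by
  classical
  refine ⟨fun y => decide (s(y, f y).out.1 = y), fun y => ?_⟩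
  have hpair : s(f y, f (f y)) = s(y, f y) := by rw [hf y, Sym2.eq_swap]
  simp only [hpair]
  rcases Sym2.mem_iff.mp (Sym2.out_fst_mem s(y, f y)) with h | h <;> simp [h, hfix y, (hfix y).symm]

section Involutions

variable {X : Type*} {α β : Perm X}

theorem apply_zpow_mul_apply (hα : Involutive α) (hβ : Involutive β) (j : ℤ) (x : X) :
    α (((β * α) ^ j) x) = ((β * α) ^ (-j)) (α x) := by
  have hα' : α⁻¹ = α := by ext x; exact (Equiv.symm_apply_eq _).mpr (hα x).symm
  have hβ' : β⁻¹ = β := by ext x; exact (Equiv.symm_apply_eq _).mpr (hβ x).symm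
  have hconj : SemiconjBy α (β * α) (β * α)⁻¹ := by
    rw [SemiconjBy, mul_inv_rev, hα', hβ', mul_assoc]
  have := Perm.ext_iff.mp (hconj.zpow_right j) x
  rwa [Perm.mul_apply, Perm.mul_apply, inv_zpow'] at this

theorem sameCycle_apply_apply (hα : Involutive α) (hβ : Involutive β) {x y : X}
    (h : (β * α).SameCycle x y) : (β * α).SameCycle (α x) (α y) := by
  obtain ⟨j, rfl⟩ := h
  exact ⟨-j, (apply_zpow_mul_apply hα hβ j x).symm⟩

theorem not_sameCycle_apply (hα : Involutive α) (hβ : Involutive β) (hα₀ : ∀ x, α x ≠ x)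
    (hβ₀ : ∀ x, β x ≠ x) (x : X) : ¬(β * α).SameCycle x (α x) := by
  rintro ⟨m, hm⟩
  obtain ⟨s, rfl | rfl⟩ := Int.even_or_odd' m
  · apply hα₀ (((β * α) ^ s) x)
    rw [apply_zpow_mul_apply hα hβ, ← hm, ← Perm.mul_apply, ← zpow_add]
    congr 2
    ring
  · apply hβ₀ (((β * α) ^ (s + 1)) x)
    have hβg : ∀ y, β y = (β * α) (α y) := fun y => by simp [hα y]
    rw [hβg, apply_zpow_mul_apply hα hβ, ← hm, ← Perm.mul_apply, ← Perm.mul_apply,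
      mul_assoc, ← zpow_add, ← zpow_one_add]
    congr 2
    ring

theorem exists_bool_apply_eq_not_of_involutive (hα : Involutive α) (hβ : Involutive β)
    (hα₀ : ∀ x, α x ≠ x) (hβ₀ : ∀ x, β x ≠ x) :
    ∃ c : X → Bool, (∀ x, c (α x) = !c x) ∧ ∀ x, c (β x) = !c x := by
  let s := Perm.SameCycle.setoid (β * α)
  let α' : Quotient s → Quotient s := Quotient.map α fun _ _ => sameCycle_apply_apply hα hβ
  have hα' : Involutive α' := by
    rintro ⟨x⟩
    exact congrArg (Quotient.mk s) (hα x)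
  have hα'₀ : ∀ q, α' q ≠ q := by
    rintro ⟨x⟩ h
    exact not_sameCycle_apply hα hβ hα₀ hβ₀ x (Quotient.exact h).symm
  obtain ⟨T, hT⟩ := hα'.exists_bool_apply_eq_not hα'₀
  refine ⟨fun x => T ⟦x⟧, fun x => hT ⟦x⟧, fun x => ?_⟩
  have hβx : (⟦β x⟧ : Quotient s) = ⟦α x⟧ := by
    refine Quotient.sound (?_ : (β * α).SameCycle (β x) (α x))
    simpa [hα x] using (Perm.SameCycle.refl (β * α) (α x)).apply_left
  exact (congrArg T hβx).trans (hT ⟦x⟧)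

end Involutions

section Benes

variable {ι : Type*} [DecidableEq ι]

theorem exists_isSwitchAt_mul_mul_apply_eq (π : Perm (ι → Bool)) (k : ι) :
    ∃ a b : Perm (ι → Bool), IsSwitchAt k a ∧ IsSwitchAt k b ∧ ∀ w, (a * π * b) w k = w k := by
  obtain ⟨c, hcflip, hcconj⟩ := exists_bool_apply_eq_not_of_involutive
    (α := flipAt k) (β := π⁻¹ * flipAt k * π) (flipAt_flipAt k) (fun x => by simp)
    (flipAt_ne_self k) fun x h => flipAt_ne_self k (π x) (Perm.inv_eq_iff_eq.mp h)
  obtain ⟨b, hb, -, hcb⟩ := exists_isSwitchAt_apply_eq k hcflip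
  obtain ⟨a, ha, hak, -⟩ := exists_isSwitchAt_apply_eq k (d := fun u => c (π⁻¹ u))
    fun u => by simpa using hcconj (π⁻¹ u)
  exact ⟨a, b, ha, hb, fun w => by simp [hak, hcb]⟩

theorem exists_benes_factorization {n : ℕ} (ks : Fin n → ι) (π : Perm (ι → Bool))
    (hπ : ∀ w, ∀ j ∉ Set.range ks, π w j = w j) :
    ∃ A B : Fin n → Perm (ι → Bool), (∀ t, IsSwitchAt (ks t) (A t) ∧ IsSwitchAt (ks t) (B t)) ∧
      π = (List.ofFn A).prod * (List.ofFn B).reverse.prod := by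
  induction n generalizing π with
  | zero =>
    refine ⟨Fin.elim0, Fin.elim0, fun t => t.elim0, ?_⟩
    ext w j
    simp [hπ w j (by simp)]
  | succ n ih =>
    obtain ⟨a, b, ha, hb, hfix⟩ := exists_isSwitchAt_mul_mul_apply_eq π (ks 0)
    have hm : ∀ w, ∀ j ∉ Set.range fun t : Fin n => ks t.succ, (a * π * b) w j = w j := by
      intro w j hj
      by_cases hj₀ : j = ks 0
      · exact hj₀ ▸ hfix w
      have hj' : j ∉ Set.range ks := by
        rintro ⟨t, rfl⟩
        cases t using Fin.cases with
        | zero => exact hj₀ rfl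
        | succ t => exact hj ⟨t, rfl⟩
      simp [ha _ j hj₀, hπ _ j hj', hb w j hj₀]
    obtain ⟨A, B, hAB, hprod⟩ := ih _ (a * π * b) hm
    refine ⟨Fin.cons a⁻¹ A, Fin.cons b⁻¹ B, Fin.cases ⟨ha.inv, hb.inv⟩ hAB, ?_⟩
    calc π = a⁻¹ * (a * π * b) * b⁻¹ := by group
      _ = _ := by simp [hprod, List.ofFn_succ, mul_assoc]

end Benes

section Sweeps

variable {W C : Type*} [AddGroup C]

def skewShift (f : C → Perm W) (d : C) : Perm (W × C) where
  toFun v := (f v.2 v.1, v.2 + d)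
  invFun v := ((f (v.2 - d)).symm v.1, v.2 - d)
  left_inv v := by simp
  right_inv v := by simp

@[simp]
theorem skewShift_apply (f : C → Perm W) (d : C) (v : W × C) :
    skewShift f d v = (f v.2 v.1, v.2 + d) := rfl

theorem skewShift_mul_skewShift (f g : C → Perm W) (d e : C) :
    skewShift g e * skewShift f d = skewShift (fun c => g (c + d) * f c) (d + e) := by
  ext ⟨w, c⟩ <;> simp [add_assoc]

/-- In step `t` of a sweep, the row in column `c` is the one that entered in column `c - t • d`,
and it applies that column's `t`-th permutation. -/
def sweep {n : ℕ} (F : C → Fin n → Perm W) (d : C) (t : Fin n) : Perm (W × C) :=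
  skewShift (fun c => F (c - (t : ℕ) • d) t) d

theorem prod_ofFn_sweep {n : ℕ} (F : C → Fin n → Perm W) (d : C) :
    (List.ofFn (sweep F d)).reverse.prod =
      skewShift (fun c => (List.ofFn (F c)).reverse.prod) (n • d) := by
  induction n with
  | zero => ext ⟨w, c⟩ <;> simp
  | succ n ih =>
    have ih' := ih fun c t => F c t.castSucc
    simp only [List.ofFn_succ', List.concat_eq_append, List.reverse_concat, List.prod_cons]
    rw [show (fun t : Fin n => sweep F d t.castSucc) = sweep (fun c t => F c t.castSucc) d from rfl,
      ih', sweep, skewShift_mul_skewShift, succ_nsmul]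
    simp [Fin.val_last]

def roundTrip {n : ℕ} (F G : C → Fin n → Perm W) (d : C) (t : Fin (2 * n)) : Perm (W × C) :=
  Fin.append (sweep F d) (sweep G (-d)) (t.cast (two_mul n))

theorem roundTrip_of_lt {n : ℕ} (F G : C → Fin n → Perm W) (d : C) {t : Fin (2 * n)}
    (ht : (t : ℕ) < n) : roundTrip F G d t = sweep F d ⟨t, ht⟩ := by
  rw [roundTrip, show t.cast (two_mul n) = Fin.castAdd n ⟨t, ht⟩ from Fin.ext rfl,
    Fin.append_left]

theorem roundTrip_of_le {n : ℕ} (F G : C → Fin n → Perm W) (d : C) {t : Fin (2 * n)}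
    (ht : n ≤ (t : ℕ)) : roundTrip F G d t = sweep G (-d) ⟨t - n, by omega⟩ := by
  rw [roundTrip, show t.cast (two_mul n) = Fin.natAdd n ⟨t - n, by omega⟩ from
    Fin.ext (by simp; omega), Fin.append_right]

theorem prod_ofFn_roundTrip {n : ℕ} (F G : C → Fin n → Perm W) (d : C) :
    (List.ofFn (roundTrip F G d)).reverse.prod =
      skewShift (fun c => (List.ofFn (G (c + n • d))).reverse.prod *
        (List.ofFn (F c)).reverse.prod) 0 := by
  unfold roundTrip
  rw [List.ofFn_congr (two_mul n)]
  simp only [Fin.cast_cast, Fin.cast_eq_self, List.ofFn_fin_append, List.reverse_append,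
    List.prod_append, prod_ofFn_sweep, skewShift_mul_skewShift, neg_nsmul, add_neg_cancel]

end Sweeps

theorem List.ofFn_rev {α : Type*} {n : ℕ} (f : Fin n → α) :
    List.ofFn (fun i => f i.rev) = (List.ofFn f).reverse :=
  List.ext_getElem (by simp) fun i h₁ h₂ => by
    simp only [List.getElem_ofFn, List.getElem_reverse, List.length_ofFn]
    congr 1
    ext
    simp only [Fin.val_rev]
    simp only [List.length_ofFn] at h₁
    omega

theorem ZMod.natCast_finRev {r : ℕ} (s : Fin r) : ((s.rev : ℕ) : ZMod r) = -((s : ℕ) + 1) := by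
  rw [Fin.val_rev, Nat.cast_sub s.isLt, ZMod.natCast_self, Nat.cast_succ, zero_sub]

section Butterfly

variable {r : ℕ} [NeZero r]

def colBit (c : ZMod r) : Fin r := ⟨c.val, c.val_lt⟩

@[simp]
theorem colBit_cast (c : ZMod r) : ((colBit c : ℕ) : ZMod r) = c := ZMod.natCast_zmod_val c

@[simp]
theorem colBit_natCast (k : Fin r) : colBit ((k : ℕ) : ZMod r) = k :=
  Fin.ext (ZMod.val_natCast_of_lt k.isLt)

theorem IsSwitchAt.eq_or_diffAtCol {c : ZMod r} {g : Perm (Fin r → Bool)}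
    (h : IsSwitchAt (colBit c) g) (w : Fin r → Bool) : w = g w ∨ diffAtCol r w (g w) c := by
  refine or_iff_not_imp_left.mpr fun hw j => ⟨fun hj => ?_, fun hj => ?_⟩
  · by_contra hjc
    exact hj (h w j fun e => hjc (e ▸ colBit_cast c)).symm
  · obtain rfl : j = colBit c := by rw [← hj, colBit_natCast]
    refine fun hwj => hw (funext fun i => ?_)
    by_cases hi : i = colBit c
    · exact hi ▸ hwj
    · exact (h w i hi).symm

theorem skewShift_one_eq_or_adj {f : ZMod r → Perm (Fin r → Bool)}
    (hf : ∀ c, IsSwitchAt (colBit c) (f c)) (v : (Fin r → Bool) × ZMod r) :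
    skewShift f 1 v = v ∨ (cyclicButterfly r).Adj v (skewShift f 1 v) :=
  or_iff_not_imp_left.mpr fun hv =>
    ⟨Ne.symm hv, Or.inl ⟨rfl, (hf v.2).eq_or_diffAtCol v.1⟩⟩

theorem skewShift_neg_one_eq_or_adj {f : ZMod r → Perm (Fin r → Bool)}
    (hf : ∀ c, IsSwitchAt (colBit (c - 1)) (f c)) (v : (Fin r → Bool) × ZMod r) :
    skewShift f (-1) v = v ∨ (cyclicButterfly r).Adj v (skewShift f (-1) v) := by
  refine or_iff_not_imp_left.mpr fun hv => ⟨Ne.symm hv, Or.inr ⟨by simp, ?_⟩⟩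
  simpa [sub_eq_add_neg] using (hf v.2).eq_or_diffAtCol v.1

theorem sweep_one_eq_or_adj {F : ZMod r → Fin r → Perm (Fin r → Bool)}
    (hF : ∀ i (t : Fin r), IsSwitchAt (colBit (i + ((t : ℕ) : ZMod r))) (F i t)) (t : Fin r)
    (v : (Fin r → Bool) × ZMod r) :
    sweep F 1 t v = v ∨ (cyclicButterfly r).Adj v (sweep F 1 t v) :=
  skewShift_one_eq_or_adj (fun c => by simpa using hF (c - t) t) v

theorem sweep_neg_one_rev_eq_or_adj {F : ZMod r → Fin r → Perm (Fin r → Bool)}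
    (hF : ∀ i (t : Fin r), IsSwitchAt (colBit (i + ((t : ℕ) : ZMod r))) (F i t)) (s : Fin r)
    (v : (Fin r → Bool) × ZMod r) :
    sweep (fun c s => F c s.rev) (-1) s v = v ∨
      (cyclicButterfly r).Adj v (sweep (fun c s => F c s.rev) (-1) s v) := by
  refine skewShift_neg_one_eq_or_adj (fun c => ?_) v
  convert hF _ _ using 2
  rw [ZMod.natCast_finRev]
  simp
  ring

end Butterfly

/-- **Pipelined simultaneous column permutations.** For `r ≥ 1` and any family `τ i` of
permutations of the `r`-bit words (one per column `i`), the global permutation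
`(w, i) ↦ (τ i w, i)` of the cyclic butterfly factors as a composition `σ_{2r} ∘ ⋯ ∘ σ_1`
of `2r` permutations of the vertex set, each moving every vertex to itself or a neighbour,
where for the first `r` steps every moved vertex has its column incremented by `1 (mod r)`
and for the last `r` steps every moved vertex has its column decremented by `1 (mod r)`. -/
theorem cyclicButterfly_pipelined_columns (r : ℕ) (hr : 1 ≤ r)
    (τ : ZMod r → Equiv.Perm (Fin r → Bool)) :
    ∃ σ : Fin (2 * r) → Equiv.Perm ((Fin r → Bool) × ZMod r),
      (∀ t, ∀ v, σ t v = v ∨ (cyclicButterfly r).Adj v (σ t v)) ∧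
      (∀ t : Fin (2 * r), (t : ℕ) < r →
        ∀ v, σ t v ≠ v → (σ t v).2 = v.2 + 1) ∧
      (∀ t : Fin (2 * r), r ≤ (t : ℕ) →
        ∀ v, σ t v ≠ v → (σ t v).2 = v.2 - 1) ∧
      ∀ w : Fin r → Bool, ∀ i : ZMod r,
        (List.ofFn σ).reverse.prod (w, i) = (τ i w, i) := by
  have : NeZero r := ⟨by omega⟩
  choose A B hAB hτ using fun i : ZMod r =>
    exists_benes_factorization (fun t : Fin r => colBit (i + ((t : ℕ) : ZMod r))) (τ i)
      fun w j hj => (hj ⟨colBit (j - i), by simp⟩).elim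
  refine ⟨roundTrip B (fun c s => A c s.rev) 1, fun t v => ?_, fun t ht v _ => ?_,
    fun t ht v _ => ?_, fun w i => ?_⟩
  · rcases lt_or_ge (t : ℕ) r with ht | ht
    · rw [roundTrip_of_lt _ _ _ ht]
      exact sweep_one_eq_or_adj (fun i t => (hAB i t).2) _ v
    · rw [roundTrip_of_le _ _ _ ht]
      exact sweep_neg_one_rev_eq_or_adj (fun i t => (hAB i t).1) _ v
  · simp [roundTrip_of_lt _ _ _ ht, sweep]
  · simp [roundTrip_of_le _ _ _ ht, sweep, sub_eq_add_neg]
  · simp [prod_ofFn_roundTrip, List.ofFn_rev, hτ]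
end
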